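/- Let u₀ be a preconditioned initial value. Then there exist a sequence (τ_n)_{n∈ℕ} converging to zero, a nonincreasing function φ : [0,∞) → ℝ, and a curve u ∈ C^{1/2}([0,∞), H) (globally 1/2-Hölder continuous on bounded intervals) such that the energy interpolations E_{τ_n} converge to φ pointwise on [0,∞), and for every T > 0 the piecewise linear interpolations u^{τ_n} converge to u in C([0,T],H). -/

import Mathlib

open MeasureTheory Set Filter

noncomputable section

local notation "⟪" x ", " y "⟫" => @inner ℝ _ _ x y

variable {H : Type*} [NormedAddCommGroup H] [InnerProductSpace ℝ H] [CompleteSpace H]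

/-- Assumption 1: `E` is Fréchet differentiable with (Riesz) gradient `E'`, the gradient is
locally Lipschitz, `E` is sequentially weakly lower semicontinuous, bounded below by `α`,
and the gradient is bounded on balls. -/
structure Assumption1 (E : H → ℝ) (E' : H → H) (α : ℝ) : Prop where
  grad : ∀ u : H, HasGradientAt E (E' u) u
  locLip : LocallyLipschitz E'
  wlsc : ∀ (x : ℕ → H) (y : H),
    (∀ φ : H, Tendsto (fun n => ⟪x n, φ⟫) atTop (nhds ⟪y, φ⟫)) →
    E y ≤ Filter.liminf (fun n => E (x n)) atTop
  lowerBound : ∀ u : H, α ≤ E u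
  gradBdd : ∀ R : ℝ, 0 < R → ∃ M : ℝ, ∀ w : H, ‖w‖ ≤ R → ‖E' w‖ ≤ M

/-- A minimizing movement sequence with stepwidth `τ` starting at `u₀ ∈ C`: each
`us (k+1)` minimizes `Φ_{us k, τ}` over `C`. -/
def IsMinMovSeq (E : H → ℝ) (C : Set H) (τ : ℝ) (us : ℕ → H) (u₀ : H) : Prop :=
  us 0 = u₀ ∧ ∀ k : ℕ, us (k + 1) ∈ C ∧
    ∀ z ∈ C, ‖us (k + 1) - us k‖ ^ 2 / (2 * τ) + E (us (k + 1)) ≤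
      ‖z - us k‖ ^ 2 / (2 * τ) + E z

/-- The piecewise linear interpolation `u^τ` of a minimizing movement sequence. -/
noncomputable def pwlInterp (τ : ℝ) (us : ℕ → H) (t : ℝ) : H :=
  (1 - (t - (⌊t / τ⌋₊ : ℝ) * τ) / τ) • us ⌊t / τ⌋₊ +
    ((t - (⌊t / τ⌋₊ : ℝ) * τ) / τ) • us (⌊t / τ⌋₊ + 1)

/-- The energy interpolation `E_τ(t) = E(u_{kτ})` for `t ∈ [kτ, (k+1)τ)`. -/
noncomputable def energyInterp (E : H → ℝ) (τ : ℝ) (us : ℕ → H) (t : ℝ) : ℝ :=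
  E (us ⌊t / τ⌋₊)

/-!
The discrete energy inequality `‖u_{k+1} - u_k‖² ≤ 2τ (E(u_k) - E(u_{k+1}))` telescopes, via
Cauchy–Schwarz, to `‖u_n - u_m‖² ≤ 2 (n - m) τ (E(u₀) - α)`: the interpolations are `1/2`-Hölder
up to an error `O(√τ)`. Precompactness yields, by a diagonal argument, stepwidths `τ_n → 0` along
which the trajectories converge at every rational time; the uniform Hölder bound upgrades this to
locally uniform convergence to a `1/2`-Hölder curve `u`. Since `E` is continuous, the energies
converge to `E ∘ u`, which is nonincreasing as a limit of nonincreasing functions.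
-/

open Topology
open scoped NNReal

theorem HolderOnWith.of_dist_le {X Y : Type*} [PseudoMetricSpace X] [PseudoMetricSpace Y]
    {C r : ℝ≥0} {f : X → Y} {s : Set X}
    (h : ∀ x ∈ s, ∀ y ∈ s, dist (f x) (f y) ≤ C * dist x y ^ (r : ℝ)) :
    HolderOnWith C r f s := by
  intro x hx y hy
  rw [edist_dist, edist_dist, ENNReal.ofReal_rpow_of_nonneg dist_nonneg r.coe_nonneg,
    ← ENNReal.ofReal_coe_nnreal, ← ENNReal.ofReal_mul C.coe_nonneg]
  exact ENNReal.ofReal_le_ofReal (h x hx y hy)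

/-- `energyInterp E τ us = E ∘ pwcInterp τ us` definitionally. -/
def pwcInterp {X : Type*} (τ : ℝ) (us : ℕ → X) (t : ℝ) : X :=
  us ⌊t / τ⌋₊

lemma natFloor_div_mul_le {t τ : ℝ} (hτ : 0 < τ) (ht : 0 ≤ t) : (⌊t / τ⌋₊ : ℝ) * τ ≤ t :=
  (le_div_iff₀ hτ).mp (Nat.floor_le (div_nonneg ht hτ.le))

lemma lt_natFloor_div_add_one_mul {τ : ℝ} (t : ℝ) (hτ : 0 < τ) : t < (⌊t / τ⌋₊ + 1) * τ :=
  (div_lt_iff₀ hτ).mp (Nat.lt_floor_add_one _)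

lemma exists_rat_grid (T : ℝ) {h : ℚ} (hh : 0 < h) :
    ∃ Q : Finset ℚ, (∀ q ∈ Q, 0 ≤ q) ∧ ∀ t ∈ Icc (0:ℝ) T, ∃ q ∈ Q, dist t q ≤ h := by
  have hh' : (0 : ℝ) < h := by exact_mod_cast hh
  refine ⟨(Finset.range (⌈T / h⌉₊ + 1)).image fun j : ℕ => (j : ℚ) * h, ?_, fun t ht => ?_⟩
  · simp only [Finset.mem_image]
    rintro _ ⟨j, -, rfl⟩
    positivity
  · refine ⟨⌊t / h⌋₊ * h, Finset.mem_image.mpr ⟨⌊t / h⌋₊, ?_, rfl⟩, ?_⟩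
    · have : ⌊t / h⌋₊ ≤ ⌈T / h⌉₊ :=
        (Nat.floor_le_floor (by gcongr; exact ht.2)).trans (Nat.floor_le_ceil _)
      exact Finset.mem_range.mpr (Nat.lt_succ_of_le this)
    · have hlow := natFloor_div_mul_le hh' ht.1
      have hup := lt_natFloor_div_add_one_mul t hh'
      push_cast
      rw [Real.dist_eq, abs_of_nonneg (by linarith)]
      linarith

section UniformLimit

variable {X : Type*} [PseudoMetricSpace X] {f : ℕ → ℝ → X} {δ : ℕ → ℝ} {L r : ℝ≥0}

lemma exists_rat_pos_mul_rpow_lt (hr : 0 < r) {ε : ℝ} (hε : 0 < ε) :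
    ∃ h : ℚ, 0 < h ∧ (L : ℝ) * (h : ℝ) ^ (r : ℝ) < ε := by
  have hcont : ContinuousAt (fun x : ℝ => (L : ℝ) * x ^ (r : ℝ)) 0 :=
    continuousAt_const.mul (Real.continuousAt_rpow_const _ _ (Or.inr r.coe_nonneg))
  have hsmall : {x : ℝ | (L : ℝ) * x ^ (r : ℝ) < ε} ∈ 𝓝 0 := by
    refine hcont.preimage_mem_nhds (Iio_mem_nhds ?_)
    simpa [Real.zero_rpow (NNReal.coe_pos.mpr hr).ne'] using hε
  obtain ⟨η, hη, hball⟩ := Metric.mem_nhds_iff.mp hsmall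
  obtain ⟨h, h0, hη'⟩ := exists_rat_btwn hη
  refine ⟨h, by exact_mod_cast h0, hball ?_⟩
  rw [Metric.mem_ball, Real.dist_0_eq_abs, abs_of_pos h0]
  exact hη'

lemma uniformCauchySeqOn_Icc_of_cauchySeq_rat (hr : 0 < r) (hδ : Tendsto δ atTop (𝓝 0))
    (hf : ∀ n, ∀ s ∈ Ici (0:ℝ), ∀ t ∈ Ici (0:ℝ),
      dist (f n s) (f n t) ≤ L * dist s t ^ (r : ℝ) + δ n)
    (hq : ∀ q : ℚ, 0 ≤ q → CauchySeq fun n => f n q) (T : ℝ) :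
    UniformCauchySeqOn f atTop (Icc 0 T) := by
  rw [Metric.uniformCauchySeqOn_iff]
  intro ε hε
  obtain ⟨h, hh, hLh⟩ := exists_rat_pos_mul_rpow_lt (L := L) hr (by positivity : 0 < ε / 5)
  obtain ⟨Q, hQ0, hQ⟩ := exists_rat_grid T hh
  have hδsmall : ∀ᶠ n in atTop, δ n < ε / 5 := hδ.eventually (gt_mem_nhds (by positivity))
  have hδsmall₂ : ∀ᶠ p : ℕ × ℕ in atTop, δ p.1 < ε / 5 ∧ δ p.2 < ε / 5 := by
    rw [← prod_atTop_atTop_eq]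
    exact (hδsmall.prod_inl _).and (hδsmall.prod_inr _)
  have hev : ∀ᶠ p : ℕ × ℕ in atTop, (δ p.1 < ε / 5 ∧ δ p.2 < ε / 5) ∧
      ∀ q ∈ Q, dist (f p.1 q) (f p.2 q) < ε / 5 := by
    refine hδsmall₂.and ?_
    rw [eventually_all_finset]
    intro q hqQ
    exact (cauchySeq_iff_tendsto_dist_atTop_0.mp (hq q (hQ0 q hqQ))).eventually
      (gt_mem_nhds (by positivity : (0 : ℝ) < ε / 5))
  obtain ⟨N, hN⟩ := eventually_atTop_prod_self'.mp hev
  refine ⟨N, fun m hm n hn t ht => ?_⟩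
  obtain ⟨⟨hδm, hδn⟩, hQmn⟩ := hN m hm n hn
  obtain ⟨q, hqQ, htq⟩ := hQ t ht
  have hnear : ∀ k, dist (f k t) (f k q) ≤ ε / 5 + δ k := fun k => by
    have hq0 : (0 : ℝ) ≤ q := by exact_mod_cast hQ0 q hqQ
    have : (L : ℝ) * dist t q ^ (r : ℝ) ≤ L * (h : ℝ) ^ (r : ℝ) := by gcongr
    linarith [hf k t ht.1 q hq0]
  calc dist (f m t) (f n t) ≤ dist (f m t) (f m q) + dist (f m q) (f n q) + dist (f n q) (f n t) :=
        dist_triangle4 _ _ _ _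
    _ < ε := by linarith [hnear m, hnear n, dist_comm (f n q) (f n t), hQmn q hqQ]

lemma exists_holderOnWith_tendstoUniformlyOn [CompleteSpace X] (hr : 0 < r)
    (hδ : Tendsto δ atTop (𝓝 0))
    (hf : ∀ n, ∀ s ∈ Ici (0:ℝ), ∀ t ∈ Ici (0:ℝ),
      dist (f n s) (f n t) ≤ L * dist s t ^ (r : ℝ) + δ n)
    (hq : ∀ q : ℚ, 0 ≤ q → CauchySeq fun n => f n q) :
    ∃ u : ℝ → X, HolderOnWith L r u (Ici 0) ∧ ∀ T, TendstoUniformlyOn f u atTop (Icc 0 T) := by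
  have : Nonempty X := ⟨f 0 0⟩
  have hUC := uniformCauchySeqOn_Icc_of_cauchySeq_rat hr hδ hf hq
  have hlim : ∀ t ∈ Ici (0:ℝ), Tendsto (f · t) atTop (𝓝 (limUnder atTop (f · t))) :=
    fun t ht => ((hUC t).cauchySeq ⟨ht, le_rfl⟩).tendsto_limUnder
  refine ⟨fun t => limUnder atTop (f · t), HolderOnWith.of_dist_le fun s hs t ht => ?_,
    fun T => (hUC T).tendstoUniformlyOn_of_tendsto fun t ht => hlim t ht.1⟩
  simpa using le_of_tendsto_of_tendsto' ((hlim s hs).dist (hlim t ht))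
    (tendsto_const_nhds.add hδ) (hf · s hs t ht)

end UniformLimit

namespace IsMinMovSeq

variable {V : Type*} [NormedAddCommGroup V] {E : V → ℝ} {C : Set V} {τ α : ℝ} {us : ℕ → V}
  {u₀ : V}

lemma mem (h : IsMinMovSeq E C τ us u₀) (h₀ : u₀ ∈ C) : ∀ k, us k ∈ C
  | 0 => h.1 ▸ h₀
  | k + 1 => (h.2 k).1

lemma step_le (h : IsMinMovSeq E C τ us u₀) (h₀ : u₀ ∈ C) (k : ℕ) :
    ‖us (k + 1) - us k‖ ^ 2 / (2 * τ) + E (us (k + 1)) ≤ E (us k) := by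
  simpa using (h.2 k).2 (us k) (h.mem h₀ k)

lemma sq_norm_step_le (hτ : 0 < τ) (h : IsMinMovSeq E C τ us u₀) (h₀ : u₀ ∈ C) (k : ℕ) :
    ‖us (k + 1) - us k‖ ^ 2 ≤ 2 * τ * (E (us k) - E (us (k + 1))) := by
  have hstep : ‖us (k + 1) - us k‖ ^ 2 / (2 * τ) ≤ E (us k) - E (us (k + 1)) := by
    linarith [h.step_le h₀ k]
  rwa [div_le_iff₀ (by positivity), mul_comm] at hstep

lemma antitone_energy (hτ : 0 < τ) (h : IsMinMovSeq E C τ us u₀) (h₀ : u₀ ∈ C) :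
    Antitone (E ∘ us) :=
  antitone_nat_of_succ_le fun k => by
    have : 0 ≤ ‖us (k + 1) - us k‖ ^ 2 / (2 * τ) := by positivity
    simpa only [Function.comp_apply] using (le_add_of_nonneg_left this).trans (h.step_le h₀ k)

lemma sum_sq_norm_step_le (hτ : 0 < τ) (h : IsMinMovSeq E C τ us u₀) (h₀ : u₀ ∈ C)
    {m n : ℕ} (hmn : m ≤ n) :
    ∑ k ∈ Finset.Ico m n, ‖us (k + 1) - us k‖ ^ 2 ≤ 2 * τ * (E (us m) - E (us n)) := by
  induction n, hmn using Nat.le_induction with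
  | base => simp
  | succ n hmn ih =>
    rw [Finset.sum_Ico_succ_top hmn]
    linarith [h.sq_norm_step_le hτ h₀ n]

lemma dist_sq_le (hτ : 0 < τ) (h : IsMinMovSeq E C τ us u₀) (h₀ : u₀ ∈ C)
    {m n : ℕ} (hmn : m ≤ n) :
    dist (us m) (us n) ^ 2 ≤ 2 * (((n : ℝ) - m) * τ) * (E (us m) - E (us n)) := by
  have htel : dist (us m) (us n) ≤ ∑ k ∈ Finset.Ico m n, ‖us (k + 1) - us k‖ := by
    simpa only [dist_eq_norm'] using dist_le_Ico_sum_dist us hmn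
  have hcs : (∑ k ∈ Finset.Ico m n, ‖us (k + 1) - us k‖) ^ 2 ≤
      ((n : ℝ) - m) * ∑ k ∈ Finset.Ico m n, ‖us (k + 1) - us k‖ ^ 2 := by
    simpa [Nat.cast_sub hmn] using
      Finset.sum_mul_sq_le_sq_mul_sq (Finset.Ico m n) (fun _ => (1 : ℝ))
        fun k => ‖us (k + 1) - us k‖
  have hnm : (0 : ℝ) ≤ n - m := sub_nonneg.mpr (Nat.cast_le.mpr hmn)
  calc dist (us m) (us n) ^ 2
      ≤ (∑ k ∈ Finset.Ico m n, ‖us (k + 1) - us k‖) ^ 2 := by gcongr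
    _ ≤ ((n : ℝ) - m) * (2 * τ * (E (us m) - E (us n))) :=
        hcs.trans (by gcongr; exact h.sum_sq_norm_step_le hτ h₀ hmn)
    _ = 2 * (((n : ℝ) - m) * τ) * (E (us m) - E (us n)) := by ring

lemma dist_le_sqrt (hτ : 0 < τ) (h : IsMinMovSeq E C τ us u₀) (h₀ : u₀ ∈ C)
    (hα : ∀ n, α ≤ E (us n)) {m n : ℕ} (hmn : m ≤ n) {d : ℝ} (hd : ((n : ℝ) - m) * τ ≤ d) :
    dist (us m) (us n) ≤ √(2 * (E u₀ - α) * d) := by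
  have hE : E (us m) - E (us n) ≤ E u₀ - α := by
    have := h.antitone_energy hτ h₀ (Nat.zero_le m)
    simp only [Function.comp_apply, h.1] at this
    linarith [hα n]
  have hdec : 0 ≤ E (us m) - E (us n) := sub_nonneg.mpr (h.antitone_energy hτ h₀ hmn)
  refine Real.le_sqrt_of_sq_le ?_
  calc dist (us m) (us n) ^ 2 ≤ 2 * (((n : ℝ) - m) * τ) * (E (us m) - E (us n)) :=
        h.dist_sq_le hτ h₀ hmn
    _ ≤ 2 * d * (E u₀ - α) := by
        have : 0 ≤ ((n : ℝ) - m) * τ :=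
          mul_nonneg (sub_nonneg.mpr (Nat.cast_le.mpr hmn)) hτ.le
        gcongr
        linarith
    _ = 2 * (E u₀ - α) * d := by ring

lemma dist_pwcInterp_le (hτ : 0 < τ) (h : IsMinMovSeq E C τ us u₀) (h₀ : u₀ ∈ C)
    (hα : ∀ n, α ≤ E (us n)) {s t : ℝ} (hs : 0 ≤ s) (hst : s ≤ t) :
    dist (pwcInterp τ us s) (pwcInterp τ us t) ≤ √(2 * (E u₀ - α) * (t - s + τ)) := by
  refine h.dist_le_sqrt hτ h₀ hα (Nat.floor_le_floor (by gcongr)) ?_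
  have := natFloor_div_mul_le hτ (hs.trans hst)
  have := lt_natFloor_div_add_one_mul s hτ
  linarith

lemma antitone_energyInterp (hτ : 0 < τ) (h : IsMinMovSeq E C τ us u₀) (h₀ : u₀ ∈ C) :
    Antitone (energyInterp E τ us) :=
  fun _ _ hst => h.antitone_energy hτ h₀ (Nat.floor_le_floor (by gcongr))

variable [InnerProductSpace ℝ V]

lemma dist_pwlInterp_pwcInterp_le (hτ : 0 < τ) (h : IsMinMovSeq E C τ us u₀) (h₀ : u₀ ∈ C)
    (hα : ∀ n, α ≤ E (us n)) {t : ℝ} (ht : 0 ≤ t) :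
    dist (pwlInterp τ us t) (pwcInterp τ us t) ≤ √(2 * (E u₀ - α) * τ) := by
  set k := ⌊t / τ⌋₊
  set θ : ℝ := (t - k * τ) / τ
  have hθ₀ : 0 ≤ θ := div_nonneg (sub_nonneg.mpr (natFloor_div_mul_le hτ ht)) hτ.le
  have hθ₁ : θ ≤ 1 := by
    rw [div_le_one hτ]
    linarith [lt_natFloor_div_add_one_mul t hτ]
  have hdiff : pwlInterp τ us t - pwcInterp τ us t = θ • (us (k + 1) - us k) := by
    simp only [pwlInterp, pwcInterp]
    module
  calc dist (pwlInterp τ us t) (pwcInterp τ us t) = θ * dist (us k) (us (k + 1)) := by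
        rw [dist_eq_norm, hdiff, norm_smul, Real.norm_of_nonneg hθ₀, dist_eq_norm']
    _ ≤ 1 * dist (us k) (us (k + 1)) := by gcongr
    _ ≤ √(2 * (E u₀ - α) * τ) := by
        rw [one_mul]
        exact h.dist_le_sqrt hτ h₀ hα k.le_succ (by push_cast; linarith)

lemma dist_pwlInterp_le (hτ : 0 < τ) (h : IsMinMovSeq E C τ us u₀) (h₀ : u₀ ∈ C)
    (hα : ∀ n, α ≤ E (us n)) {s t : ℝ} (hs : 0 ≤ s) (ht : 0 ≤ t) :
    dist (pwlInterp τ us s) (pwlInterp τ us t) ≤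
      √(2 * (E u₀ - α)) * dist s t ^ (1 / 2 : ℝ) + 3 * √(2 * (E u₀ - α) * τ) := by
  wlog hst : s ≤ t generalizing s t
  · simpa only [dist_comm] using this ht hs (le_of_not_ge hst)
  have hc : 0 ≤ 2 * (E u₀ - α) := by linarith [h.1 ▸ hα 0]
  have hsplit : √(2 * (E u₀ - α) * (t - s + τ)) ≤
      √(2 * (E u₀ - α)) * dist s t ^ (1 / 2 : ℝ) + √(2 * (E u₀ - α) * τ) := by
    rw [Real.dist_eq, abs_sub_comm, abs_of_nonneg (sub_nonneg.mpr hst), ← Real.sqrt_eq_rpow,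
      ← Real.sqrt_mul hc, mul_add]
    simpa only [Real.sqrt_eq_rpow] using
      Real.rpow_add_le_add_rpow (mul_nonneg hc (sub_nonneg.mpr hst)) (mul_nonneg hc hτ.le)
        (by norm_num) (by norm_num)
  calc dist (pwlInterp τ us s) (pwlInterp τ us t)
      ≤ dist (pwlInterp τ us s) (pwcInterp τ us s) + dist (pwcInterp τ us s) (pwcInterp τ us t)
        + dist (pwcInterp τ us t) (pwlInterp τ us t) := dist_triangle4 _ _ _ _
    _ ≤ √(2 * (E u₀ - α) * τ) + √(2 * (E u₀ - α) * (t - s + τ)) + √(2 * (E u₀ - α) * τ) := by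
        rw [dist_comm (pwcInterp τ us t)]
        gcongr
        · exact h.dist_pwlInterp_pwcInterp_le hτ h₀ hα hs
        · exact h.dist_pwcInterp_le hτ h₀ hα hs hst
        · exact h.dist_pwlInterp_pwcInterp_le hτ h₀ hα ht
    _ ≤ _ := by linarith

end IsMinMovSeq

lemma exists_strictMono_tendsto_of_forall_mem_isCompact {ι X : Type*} [Countable ι]
    [TopologicalSpace X] [FirstCountableTopology X] {K : ι → Set X} (hK : ∀ i, IsCompact (K i))
    {g : ℕ → ι → X} (hg : ∀ n i, g n i ∈ K i) :
    ∃ a : ι → X, ∃ ψ : ℕ → ℕ, StrictMono ψ ∧ ∀ i, Tendsto (fun n => g (ψ n) i) atTop (𝓝 (a i)) := by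
  obtain ⟨a, -, ψ, hψ, hlim⟩ :=
    (isCompact_univ_pi hK).isSeqCompact fun n => mem_univ_pi.mpr (hg n)
  exact ⟨a, ψ, hψ, tendsto_pi_nhds.mp hlim⟩

lemma exists_stepwidths_tendsto_pwcInterp_rat {X : Type*} [TopologicalSpace X]
    [FirstCountableTopology X] (us : ℝ → ℕ → X)
    (hprecomp : ∀ T : ℝ, 0 < T →
      IsCompact (closure {x : X | ∃ τ ∈ Ioo (0:ℝ) 1, ∃ k : ℕ, (k : ℝ) * τ ≤ T ∧ x = us τ k})) :
    ∃ τs : ℕ → ℝ, (∀ n, τs n ∈ Ioo (0:ℝ) 1) ∧ Tendsto τs atTop (𝓝 0) ∧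
      ∀ q : ℚ, 0 ≤ q → ∃ a, Tendsto (fun n => pwcInterp (τs n) (us (τs n)) q) atTop (𝓝 a) := by
  obtain ⟨σ, -, hσ, hσ0⟩ := exists_seq_strictAnti_tendsto' (zero_lt_one' ℝ)
  have hq₀ (q : {q : ℚ // 0 ≤ q}) : (0 : ℝ) ≤ q.1 := by exact_mod_cast q.2
  obtain ⟨a, ψ, hψ, ha⟩ := exists_strictMono_tendsto_of_forall_mem_isCompact
    (K := fun q : {q : ℚ // 0 ≤ q} => closure {x : X | ∃ τ ∈ Ioo (0:ℝ) 1, ∃ k : ℕ,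
      (k : ℝ) * τ ≤ q + 1 ∧ x = us τ k})
    (fun q => hprecomp _ (by linarith [hq₀ q]))
    (g := fun m q => pwcInterp (σ m) (us (σ m)) q)
    fun m q => subset_closure ⟨σ m, hσ m, _, by
      linarith [natFloor_div_mul_le (hσ m).1 (hq₀ q)], rfl⟩
  exact ⟨σ ∘ ψ, fun n => hσ _, hσ0.comp hψ.tendsto_atTop, fun q hq => ⟨_, ha ⟨q, hq⟩⟩⟩

theorem limit_trajectories_general
    (E : H → ℝ) (E' : H → H) (α : ℝ) (hE : Assumption1 E E' α)
    (C : Set H)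
    (u₀ : H) (hu₀ : u₀ ∈ C)
    (us : ℝ → ℕ → H) (hus : ∀ τ ∈ Ioo (0:ℝ) 1, IsMinMovSeq E C τ (us τ) u₀)
    (hprecomp : ∀ T : ℝ, 0 < T →
      IsCompact (closure {x : H | ∃ τ ∈ Ioo (0:ℝ) 1, ∃ k : ℕ, (k : ℝ) * τ ≤ T ∧ x = us τ k})) :
    ∃ τseq : ℕ → ℝ, (∀ n, τseq n ∈ Ioo (0:ℝ) 1) ∧
      Filter.Tendsto τseq Filter.atTop (nhds 0) ∧
      ∃ φ : ℝ → ℝ, AntitoneOn φ (Ici 0) ∧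
      ∃ u : ℝ → H, (∃ L : NNReal, HolderOnWith L (1/2) u (Ici 0)) ∧
        (∀ t : ℝ, 0 ≤ t →
          Filter.Tendsto (fun n => energyInterp E (τseq n) (us (τseq n)) t)
            Filter.atTop (nhds (φ t))) ∧
        (∀ T : ℝ, 0 < T →
          TendstoUniformlyOn (fun n => pwlInterp (τseq n) (us (τseq n))) u
            Filter.atTop (Icc 0 T)) := by
  obtain ⟨τs, hτs, hτs0, hrat⟩ := exists_stepwidths_tendsto_pwcInterp_rat us hprecomp
  have hmms n : IsMinMovSeq E C (τs n) (us (τs n)) u₀ := hus _ (hτs n)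
  have hα n k : α ≤ E (us (τs n) k) := hE.lowerBound _
  have hgap : Tendsto (fun n => √(2 * (E u₀ - α) * τs n)) atTop (𝓝 0) := by
    simpa using (tendsto_const_nhds.mul hτs0).sqrt
  have hpwl_pwc t (ht : 0 ≤ t) : Tendsto (fun n => dist (pwlInterp (τs n) (us (τs n)) t)
      (pwcInterp (τs n) (us (τs n)) t)) atTop (𝓝 0) :=
    squeeze_zero (fun _ => dist_nonneg)
      (fun n => (hmms n).dist_pwlInterp_pwcInterp_le (hτs n).1 hu₀ (hα n) ht) hgap
  obtain ⟨u, hu, hconv⟩ := exists_holderOnWith_tendstoUniformlyOn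
    (f := fun n => pwlInterp (τs n) (us (τs n))) (L := (√(2 * (E u₀ - α))).toNNReal)
    (r := 1 / 2) (by norm_num) (by simpa using hgap.const_mul 3)
    (fun n s hs t ht => by
      simpa [Real.coe_toNNReal _ (Real.sqrt_nonneg _)] using
        (hmms n).dist_pwlInterp_le (hτs n).1 hu₀ (hα n) hs ht)
    (fun q hq => by
      obtain ⟨a, ha⟩ := hrat q hq
      refine (ha.congr_dist ?_).cauchySeq
      simpa only [dist_comm] using hpwl_pwc q (by exact_mod_cast hq))
  have hpwc t (ht : 0 ≤ t) : Tendsto (fun n => pwcInterp (τs n) (us (τs n)) t) atTop (𝓝 (u t)) :=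
    ((hconv t).tendsto_at ⟨ht, le_rfl⟩).congr_dist (hpwl_pwc t ht)
  have henergy t (ht : 0 ≤ t) :
      Tendsto (fun n => energyInterp E (τs n) (us (τs n)) t) atTop (𝓝 (E (u t))) :=
    (hE.grad (u t)).continuousAt.tendsto.comp (hpwc t ht)
  refine ⟨τs, hτs, hτs0, E ∘ u, fun s hs t ht hst => ?_, u, ⟨_, hu⟩, henergy, fun T _ => hconv T⟩
  exact le_of_tendsto_of_tendsto' (henergy t ht) (henergy s hs)
    fun n => (hmms n).antitone_energyInterp (hτs n).1 hu₀ hst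

/-- **Limit trajectories.** If `u₀` is a preconditioned initial value (witnessed by the family
`us` of minimizing movement sequences whose discrete trajectories are precompact up to each
time `T`), then there are `τ_n → 0`, a nonincreasing `φ : [0,∞) → ℝ`, and a `1/2`-Hölder
continuous curve `u : [0,∞) → H` such that `E_{τ_n} → φ` pointwise and `u^{τ_n} → u` in
`C([0,T],H)` for every `T > 0`. -/
theorem limit_trajectories
    (E : H → ℝ) (E' : H → H) (α : ℝ) (hE : Assumption1 E E' α)
    (C : Set H) (hCne : C.Nonempty) (hCcl : IsClosed C) (hCcv : Convex ℝ C)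
    (u₀ : H) (hu₀ : u₀ ∈ C)
    (us : ℝ → ℕ → H) (hus : ∀ τ ∈ Ioo (0:ℝ) 1, IsMinMovSeq E C τ (us τ) u₀)
    (hprecomp : ∀ T : ℝ, 0 < T →
      IsCompact (closure {x : H | ∃ τ ∈ Ioo (0:ℝ) 1, ∃ k : ℕ, (k : ℝ) * τ ≤ T ∧ x = us τ k})) :
    ∃ τseq : ℕ → ℝ, (∀ n, τseq n ∈ Ioo (0:ℝ) 1) ∧
      Filter.Tendsto τseq Filter.atTop (nhds 0) ∧
      ∃ φ : ℝ → ℝ, AntitoneOn φ (Ici 0) ∧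
      ∃ u : ℝ → H, (∃ L : NNReal, HolderOnWith L (1/2) u (Ici 0)) ∧
        (∀ t : ℝ, 0 ≤ t →
          Filter.Tendsto (fun n => energyInterp E (τseq n) (us (τseq n)) t)
            Filter.atTop (nhds (φ t))) ∧
        (∀ T : ℝ, 0 < T →
          TendstoUniformlyOn (fun n => pwlInterp (τseq n) (us (τseq n))) u
            Filter.atTop (Icc 0 T)) :=
  limit_trajectories_general E E' α hE C u₀ hu₀ us hus hprecomp
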